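/- arXiv:0905.0008 — 2 statements merged into one kernel-verified Lean document; each statement's English description precedes it below -/
import Mathlib

section
/- Let W be the Gauss word of a knot diagram with n ≥ 1 crossings. Then the minimal warping degree over the two orientations satisfies 2 · min(d(W), d(-W)) ≤ n − 1. -/
/-- A Gauss word on `n` labels: each label occurs exactly twice,
once with flag `true` (over-passage) and once with flag `false` (under-passage). -/
def IsGaussWord {n : ℕ} (W : List (Fin n × Bool)) : Prop :=
  ∀ i : Fin n, W.count (i, true) = 1 ∧ W.count (i, false) = 1

/-- Based warping degree: the number of labels whose first occurrence carries flag `false`. -/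
def basedWd {n : ℕ} (W : List (Fin n × Bool)) : ℕ :=
  (Finset.univ.filter fun i : Fin n =>
    W.idxOf (i, false) < W.idxOf (i, true)).card

/-- Warping degree of a Gauss word: minimum of the based warping degree
over all cyclic rotations. -/
noncomputable def wd {n : ℕ} (W : List (Fin n × Bool)) : ℕ :=
  sInf {v | ∃ k : ℕ, v = basedWd (W.rotate k)}

/-- A Gauss word is alternating if the flags of consecutive entries alternate. -/
def IsAlternating {n : ℕ} (W : List (Fin n × Bool)) : Prop :=
  W.Chain' fun x y => y.2 = !x.2

/-- Based linking warping degree for the ordering given by `σ`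
(component `i` precedes `j` when `σ i < σ j`). -/
def ldSigma {r : ℕ} (m : Fin r → Fin r → ℕ) (σ : Equiv.Perm (Fin r)) : ℕ :=
  ∑ p ∈ Finset.univ.filter (fun p : Fin r × Fin r => σ p.1 < σ p.2), m p.1 p.2

/-- Linking warping degree: minimum over all orderings. -/
noncomputable def linkLd {r : ℕ} (m : Fin r → Fin r → ℕ) : ℕ :=
  sInf {v | ∃ σ : Equiv.Perm (Fin r), v = ldSigma m σ}

/-- Linking crossing number: number of non-self crossings. -/
def lcNum {r : ℕ} (m : Fin r → Fin r → ℕ) : ℕ :=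
  ∑ p ∈ Finset.univ.filter (fun p : Fin r × Fin r => p.1 ≠ p.2), m p.1 p.2

/-- Warping degree of an ordered link diagram: minimum over all orderings `σ`
and all choices of cyclic rotations (base points) of the components. -/
noncomputable def linkWd {r : ℕ} {n : Fin r → ℕ} (W : ∀ i, List (Fin (n i) × Bool))
    (m : Fin r → Fin r → ℕ) : ℕ :=
  sInf {v | ∃ (σ : Equiv.Perm (Fin r)) (k : Fin r → ℕ),
    v = (∑ i, basedWd ((W i).rotate (k i))) + ldSigma m σ}

/-- Crossing number of the link diagram. -/
def crossingNum {r : ℕ} (n : Fin r → ℕ) (m : Fin r → Fin r → ℕ) : ℕ :=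
  (∑ i, n i) + ∑ p ∈ Finset.univ.filter (fun p : Fin r × Fin r => p.1 < p.2),
    (m p.1 p.2 + m p.2 p.1)

/-- The number of components having at least one self-crossing. -/
def srNum {r : ℕ} (n : Fin r → ℕ) : ℕ :=
  (Finset.univ.filter fun i : Fin r => 1 ≤ n i).card

/-- Property C: every component word is alternating and, for each pair of distinct
components, the number of over-crossings equals the number of under-crossings. -/
def PropertyC {r : ℕ} {n : Fin r → ℕ} (W : ∀ i, List (Fin (n i) × Bool))
    (m : Fin r → Fin r → ℕ) : Prop :=
  (∀ i, IsAlternating (W i)) ∧ ∀ i j : Fin r, i ≠ j → m i j = m j i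

/-!
Moving the base point past the first letter `(i, b)` of `W` moves that letter from first to
last place, so exactly the label `i` switches between counted and not counted: the based warping
degrees `A` of `W` and `B` of its rotation by one differ. Reversal reverses the order of the two
occurrences of every label, so `basedWd W + basedWd (-W) = n` for every base point. Hence
`d(W) ≤ min A B` and `d(-W) ≤ n - max A B`, and `2 · min (d W) (d (-W)) ≤ n - |A - B| ≤ n - 1`.
-/

namespace List

variable {α : Type*} [BEq α] [LawfulBEq α]

theorem idxOf_reverse_of_count_eq_one {l : List α} {a : α} (h : l.count a = 1) :
    l.reverse.idxOf a = l.length - 1 - l.idxOf a := by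
  induction l with
  | nil => simp at h
  | cons x t ih =>
    by_cases hxa : x = a
    · subst hxa
      have ht : x ∉ t.reverse := by
        rw [mem_reverse, ← count_pos_iff]
        simp only [count_cons_self] at h
        omega
      simp [idxOf_append_of_notMem ht]
    · rw [count_cons_of_ne hxa] at h
      have hm : a ∈ t := count_pos_iff.mp (by omega)
      have hlt : t.idxOf a < t.length := idxOf_lt_length_iff.mpr hm
      rw [reverse_cons, idxOf_append_of_mem (mem_reverse.mpr hm), idxOf_cons_ne _ hxa, ih h,
        length_cons]
      omega

end List

open Finset in
theorem Finset.card_filter_ne_of_differ_only_at {α : Type*} [DecidableEq α] {s : Finset α}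
    {p q : α → Prop} [DecidablePred p] [DecidablePred q] {a : α} (ha : a ∈ s)
    (hqa : q a ↔ ¬ p a) (hqp : ∀ b ∈ s, b ≠ a → (q b ↔ p b)) :
    #(s.filter q) ≠ #(s.filter p) := by
  rw [card_filter, card_filter, ← add_sum_erase s _ ha, ← add_sum_erase s _ ha,
    sum_congr rfl fun b hb => if_congr (hqp b (mem_of_mem_erase hb) (ne_of_mem_erase hb)) rfl rfl]
  by_cases hpa : p a <;> simp [hpa, hqa]

namespace IsGaussWord

variable {n : ℕ} {W : List (Fin n × Bool)}

theorem count_eq_one (hW : IsGaussWord W) (i : Fin n) (b : Bool) : W.count (i, b) = 1 := by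
  cases b
  exacts [(hW i).2, (hW i).1]

theorem mem (hW : IsGaussWord W) (i : Fin n) (b : Bool) : (i, b) ∈ W :=
  List.count_pos_iff.mp (by simp [hW.count_eq_one])

theorem rotate (hW : IsGaussWord W) (k : ℕ) : IsGaussWord (W.rotate k) := fun i => by
  simp only [(W.rotate_perm k).count_eq]
  exact hW i

theorem idxOf_ne (hW : IsGaussWord W) (i : Fin n) : W.idxOf (i, false) ≠ W.idxOf (i, true) := by
  simp [List.idxOf_inj (hW.mem i false)]

theorem basedWd_add_basedWd_reverse (hW : IsGaussWord W) :
    basedWd W + basedWd W.reverse = n := by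
  have hflip (i : Fin n) : W.reverse.idxOf (i, false) < W.reverse.idxOf (i, true) ↔
      ¬ W.idxOf (i, false) < W.idxOf (i, true) := by
    rw [List.idxOf_reverse_of_count_eq_one (hW.count_eq_one i false),
      List.idxOf_reverse_of_count_eq_one (hW.count_eq_one i true)]
    have := List.idxOf_lt_length_iff.mpr (hW.mem i false)
    have := List.idxOf_lt_length_iff.mpr (hW.mem i true)
    have := hW.idxOf_ne i
    omega
  rw [basedWd, basedWd, Finset.filter_congr fun i _ => hflip i,
    Finset.card_filter_add_card_filter_not, Finset.card_univ, Fintype.card_fin]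

theorem basedWd_rotate_one_ne (hW : IsGaussWord W) (hne : W ≠ []) :
    basedWd (W.rotate 1) ≠ basedWd W := by
  obtain ⟨⟨i, b⟩, T, rfl⟩ := List.exists_cons_of_ne_nil hne
  have hrot : ((i, b) :: T).rotate 1 = T ++ [(i, b)] := by simp
  have hmem (j : Fin n) (c : Bool) (h : (j, c) ≠ (i, b)) : (j, c) ∈ T :=
    (List.mem_cons.mp (hW.mem j c)).resolve_left h
  have hnotMem : (i, b) ∉ T := List.count_eq_zero.mp (by simpa using hW.count_eq_one i b)
  rw [basedWd, basedWd, hrot]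
  refine Finset.card_filter_ne_of_differ_only_at (Finset.mem_univ i) ?_ fun j _ hji => ?_
  · have hbar : (i, !b) ∈ T := hmem i (!b) (by simp)
    have hT := List.idxOf_lt_length_iff.mpr hbar
    have hbar' := List.idxOf_append_of_mem (l₂ := [(i, b)]) hbar
    cases b <;> simp only [Bool.not_false, Bool.not_true] at hT hbar' <;>
      simp [hbar', List.idxOf_append_of_notMem hnotMem] <;> omega
  · have hj (c : Bool) : (j, c) ≠ (i, b) := by simp [hji]
    simp [List.idxOf_append_of_mem (hmem j _ (hj _)), List.idxOf_cons_ne _ (hj _).symm]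

end IsGaussWord

theorem basedWd_le {n : ℕ} (W : List (Fin n × Bool)) : basedWd W ≤ n :=
  (Finset.card_filter_le _ _).trans_eq (Finset.card_fin n)

theorem basedWd_nil {n : ℕ} : basedWd ([] : List (Fin n × Bool)) = 0 := by
  simp [basedWd]

theorem wd_le_basedWd_rotate {n : ℕ} (W : List (Fin n × Bool)) (k : ℕ) :
    wd W ≤ basedWd (W.rotate k) :=
  Nat.sInf_le ⟨k, rfl⟩

theorem IsGaussWord.wd_reverse_le {n : ℕ} {W : List (Fin n × Bool)} (hW : IsGaussWord W)
    (k : ℕ) : wd W.reverse ≤ n - basedWd (W.rotate k) := by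
  have h := (hW.rotate k).basedWd_add_basedWd_reverse
  rw [List.reverse_rotate] at h
  exact (wd_le_basedWd_rotate W.reverse (W.length - k % W.length)).trans_eq (by omega)

theorem two_min_wd_le_general (n : ℕ) (W : List (Fin n × Bool))
    (hW : IsGaussWord W) :
    2 * min (wd W) (wd W.reverse) ≤ n - 1 := by
  rcases eq_or_ne W [] with rfl | hne
  · have h := wd_le_basedWd_rotate ([] : List (Fin n × Bool)) 0
    rw [List.rotate_nil, basedWd_nil, Nat.le_zero] at h
    simp [h]
  have hA := wd_le_basedWd_rotate W 0
  have hB := wd_le_basedWd_rotate W 1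
  have hA' := hW.wd_reverse_le 0
  have hB' := hW.wd_reverse_le 1
  have hAB := hW.basedWd_rotate_one_ne hne
  have hAn := basedWd_le W
  have hBn := basedWd_le (W.rotate 1)
  rw [List.rotate_zero] at hA hA'
  omega

/-- `2 · min(d(W), d(-W)) ≤ n - 1` for a knot diagram with `n ≥ 1` crossings. -/
theorem two_min_wd_le (n : ℕ) (hn : 1 ≤ n) (W : List (Fin n × Bool))
    (hW : IsGaussWord W) :
    2 * min (wd W) (wd W.reverse) ≤ n - 1 :=
  two_min_wd_le_general n W hW
end

section
/- If the equality 2·ld = lc holds, then the based linking warping degree is the same for every ordering: ld_σ = ld for every permutation σ of Fin r. -/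
/-! Reversing an ordering exchanges the roles of `i` and `j` in every pair, so
`ld_σ + ld_{σ reversed} = lc`. Both summands are at least `ld`, hence `2 · ld = lc`
forces each of them to equal `ld`. -/

theorem ldSigma_add_ldSigma_trans_revPerm {r : ℕ} (m : Fin r → Fin r → ℕ)
    (σ : Equiv.Perm (Fin r)) :
    ldSigma m σ + ldSigma m (σ.trans Fin.revPerm) = lcNum m := by
  simp only [ldSigma, lcNum, Finset.sum_filter, ← Finset.sum_add_distrib, Equiv.trans_apply,
    Fin.revPerm_apply, Fin.rev_lt_rev]
  refine Finset.sum_congr rfl fun p _ => ?_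
  by_cases hp : p.1 = p.2
  · simp [hp]
  · rcases lt_or_gt_of_ne (σ.injective.ne hp) with hlt | hgt
    · simp [hp, hlt, hlt.not_gt]
    · simp [hp, hgt, hgt.not_gt]

theorem linkLd_le_ldSigma {r : ℕ} (m : Fin r → Fin r → ℕ) (σ : Equiv.Perm (Fin r)) :
    linkLd m ≤ ldSigma m σ :=
  Nat.sInf_le ⟨σ, rfl⟩

theorem ldSigma_constant_of_two_ld_eq_lc_general (r : ℕ) (m : Fin r → Fin r → ℕ)
    (h : 2 * linkLd m = lcNum m)
    (σ : Equiv.Perm (Fin r)) :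
    ldSigma m σ = linkLd m := by
  have hsum := ldSigma_add_ldSigma_trans_revPerm m σ
  have hσ := linkLd_le_ldSigma m σ
  have hrev := linkLd_le_ldSigma m (σ.trans Fin.revPerm)
  omega

/-- if `2·ld = lc` then `ld_σ = ld` for every ordering `σ`. -/
theorem ldSigma_constant_of_two_ld_eq_lc (r : ℕ) (m : Fin r → Fin r → ℕ)
    (hm : ∀ i, m i i = 0) (h : 2 * linkLd m = lcNum m)
    (σ : Equiv.Perm (Fin r)) :
    ldSigma m σ = linkLd m :=
  ldSigma_constant_of_two_ld_eq_lc_general r m h σ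
end
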